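/- arXiv:2408.03715 — 3 statements merged into one kernel-verified Lean document; each statement's English description precedes it below -/
import Mathlib

section
/- Fix integers r ≥ 4 and i ≥ 2, and suppose β > 0. Then 2·c_0 < s_0. -/
lemma c2_eq (n : ℕ) : 2 * ((n + 1).choose 2) = n * (n + 1) := by
  induction n with
  | zero => decide
  | succ k ih =>
    have : (k + 2).choose 2 = (k + 1).choose 1 + (k + 1).choose 2 :=
      Nat.choose_succ_succ' (k + 1) 1
    simp [Nat.choose_one_right] at this
    rw [show k + 1 + 1 = k + 2 from rfl, this]
    ring_nf
    ring_nf at ih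
    omega

lemma c3_eq (n : ℕ) : 6 * ((n + 2).choose 3) = n * (n + 1) * (n + 2) := by
  induction n with
  | zero => decide
  | succ k ih =>
    have h : (k + 3).choose 3 = (k + 2).choose 2 + (k + 2).choose 3 :=
      Nat.choose_succ_succ' (k + 2) 2
    have h2 := c2_eq (k + 1)
    rw [show k + 1 + 2 = k + 3 from rfl, h]
    have : 6 * ((k + 2).choose 2 + (k + 2).choose 3)
        = 6 * ((k + 2).choose 3) + 3 * (2 * ((k + 1 + 1).choose 2)) := by ring
    rw [this, ih]
    rw [show k + 1 + 1 = k + 2 from rfl] at h2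
    rw [h2]; ring

lemma c4_eq (n : ℕ) : 24 * ((n + 3).choose 4) = n * (n + 1) * (n + 2) * (n + 3) := by
  induction n with
  | zero => decide
  | succ k ih =>
    have h : (k + 4).choose 4 = (k + 3).choose 3 + (k + 3).choose 4 :=
      Nat.choose_succ_succ' (k + 3) 3
    have h3 := c3_eq (k + 1)
    rw [show k + 1 + 3 = k + 4 from rfl, h]
    have : 24 * ((k + 3).choose 3 + (k + 3).choose 4)
        = 24 * ((k + 3).choose 4) + 4 * (6 * ((k + 1 + 2).choose 3)) := by ring
    rw [this, ih]
    rw [show k + 1 + 2 = k + 3 from rfl] at h3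
    rw [h3]; ring

/-- Lemma 2.3 (numerical part): fix integers `r ≥ 4`, `i ≥ 2`, define `α, β` by
Euclidean division `C(r+i, i) − (i+1) = α·C(i+1, 2) + β`, `0 ≤ β ≤ C(i+1,2) − 1`,
set `s₀ = α` if `β = 0` and `s₀ = α + 1` if `β > 0`, and define `c₀, γ` by
`C(i+1,2) − β = c₀·i + γ`, `0 ≤ γ ≤ i − 1`.  If `β > 0` then `2·c₀ < s₀`. -/
theorem two_c0_lt_s0 (r i α β s0 c0 γ : ℕ) (hr : 4 ≤ r) (hi : 2 ≤ i)
    (hαβ : (r + i).choose i = α * ((i + 1).choose 2) + β + (i + 1))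
    (hβlt : β < (i + 1).choose 2)
    (hs0 : s0 = if β = 0 then α else α + 1)
    (hc0γ : (i + 1).choose 2 = c0 * i + γ + β)
    (hγlt : γ < i)
    (hβpos : 0 < β) :
    2 * c0 < s0 := by
  rw [hs0, if_neg hβpos.ne']
  have hC2 : 2 * ((i + 1).choose 2) = i * (i + 1) := c2_eq i
  -- 2 * c0 ≤ i
  have hc0 : 2 * c0 ≤ i := by
    have h1 : 2 * (c0 * i) + 2 ≤ i * (i + 1) := by omega
    have h2 : (2 * c0) * i < (i + 1) * i := by nlinarith
    have := Nat.lt_of_mul_lt_mul_right h2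
    omega
  -- lower bound on the binomial
  have hmono : (i + 4).choose i ≤ (r + i).choose i := by
    apply Nat.choose_le_choose; omega
  have hsymm : (i + 4).choose i = (i + 4).choose 4 := by
    have := Nat.choose_symm (n := i + 4) (k := i) (by omega)
    simpa [show i + 4 - i = 4 by omega] using this.symm
  have h4 : 24 * ((i + 4).choose 4) = (i + 1) * (i + 2) * (i + 3) * (i + 4) := by
    have := c4_eq (i + 1)
    simpa [show i + 1 + 3 = i + 4 by omega, show i + 1 + 1 = i + 2 by omega,
      show i + 1 + 2 = i + 3 by omega] using this
  -- α ≥ i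
  have hα : i ≤ α := by
    by_contra hlt
    push_neg at hlt
    have hb : (i + 1) * (i + 2) * (i + 3) * (i + 4) ≤ 24 * ((r + i).choose i) := by
      calc (i + 1) * (i + 2) * (i + 3) * (i + 4) = 24 * ((i + 4).choose 4) := h4.symm
        _ = 24 * ((i + 4).choose i) := by rw [hsymm]
        _ ≤ 24 * ((r + i).choose i) := by omega
    rw [hαβ] at hb
    have hbb : 24 * (α * ((i + 1).choose 2) + β + (i + 1))
        = 12 * α * (2 * ((i + 1).choose 2)) + 24 * β + 24 * (i + 1) := by ring
    rw [hbb, hC2] at hb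
    have hβ' : 2 * β + 2 ≤ i * (i + 1) := by omega
    obtain ⟨t, rfl⟩ : ∃ t, i = t + 2 := ⟨i - 2, by omega⟩
    have h5 : α * ((t + 2) * (t + 3)) ≤ (t + 1) * ((t + 2) * (t + 3)) :=
      Nat.mul_le_mul_right _ (by omega)
    nlinarith [hb, hβ', h5]
  omega
end

section
/- Fix integers r ≥ 5 and i ≥ 2, and suppose β > 0. Then s_0 ≥ 2(c_0 + γ + 1); equivalently, setting R = s_0 − c_0 + 1 − γ, one has s_0 ≤ 2R − 4. -/
/-- Appendix, case `r ≥ 5`: if `β > 0`, then `s₀ ≥ 2(c₀ + γ + 1)`; equivalently,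
setting `R = s₀ − c₀ + 1 − γ`, one has `s₀ ≤ 2R − 4`. -/
theorem appendix_r_ge_5 (r i α β s0 c0 γ : ℕ) (hr : 5 ≤ r) (hi : 2 ≤ i)
    (hαβ : (r + i).choose i = α * ((i + 1).choose 2) + β + (i + 1))
    (hβlt : β < (i + 1).choose 2)
    (hs0 : s0 = if β = 0 then α else α + 1)
    (hc0γ : (i + 1).choose 2 = c0 * i + γ + β)
    (hγlt : γ < i)
    (hβpos : 0 < β) :
    2 * (c0 + γ + 1) ≤ s0 ∧
      ∀ R : ℤ, R = (s0 : ℤ) - c0 + 1 - γ → (s0 : ℤ) ≤ 2 * R - 4 := by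
  rw [if_neg hβpos.ne'] at hs0
  have hC2 : 2 * ((i + 1).choose 2) = (i + 1) * i := by
    rw [Nat.choose_two_right, Nat.add_sub_cancel, Nat.two_mul_div_two_of_even]
    simpa [Nat.mul_comm] using Nat.even_mul_succ_self i
  have h1 : (5 + i).choose i ≤ (r + i).choose i :=
    Nat.choose_le_choose i (by omega)
  have h2 : (5 + i).choose i = (5 + i).choose 5 := by
    have := Nat.choose_symm (n := 5 + i) (k := 5) (by omega)
    simpa using this
  have h3 : 120 * ((5 + i).choose 5) = (i+1)*(i+2)*(i+3)*(i+4)*(i+5) := by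
    have h := Nat.ascFactorial_eq_factorial_mul_choose i 5
    have hf : Nat.factorial 5 = 120 := by decide
    rw [hf] at h
    rw [show 5 + i = i + 5 by omega, ← h]
    simp [Nat.ascFactorial]
    ring
  obtain ⟨j, rfl⟩ := le_iff_exists_add.mp hi
  set C := ((2 + j) + 1).choose 2 with hC
  have hCpos : 0 < C := Nat.choose_pos (by omega)
  -- step 1: lower bound on the binomial coefficient
  have hbin : (3*j+5) * C + (2+j) ≤ (r + (2+j)).choose (2+j) := by
    have e : 2 * ((3*j+5) * C + (2+j)) = (3*j+5)*((2+j+1)*(2+j)) + 2*(2+j) := by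
      rw [show (3*j+5)*((2+j+1)*(2+j)) = (3*j+5)*(2*C) by rw [hC2], ]
      ring
    have hpoly : 60 * ((3*j+5)*((2+j+1)*(2+j)) + 2*(2+j))
        ≤ (2+j+1)*(2+j+2)*(2+j+3)*(2+j+4)*(2+j+5) := by
      rcases Nat.eq_zero_or_pos j with hj | hj
      · subst hj; norm_num
      · nlinarith [hj, Nat.mul_le_mul_right (j*j) hj, Nat.mul_le_mul_right (j*j*j) hj]
    have h120 : 120 * ((3*j+5) * C + (2+j)) ≤ 120 * ((r + (2+j)).choose (2+j)) := by
      calc 120 * ((3*j+5) * C + (2+j)) = 60 * (2 * ((3*j+5) * C + (2+j))) := by ring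
        _ = 60 * ((3*j+5)*((2+j+1)*(2+j)) + 2*(2+j)) := by rw [e]
        _ ≤ (2+j+1)*(2+j+2)*(2+j+3)*(2+j+4)*(2+j+5) := hpoly
        _ = 120 * ((5 + (2+j)).choose 5) := by rw [h3]
        _ = 120 * ((5 + (2+j)).choose (2+j)) := by rw [h2]
        _ ≤ 120 * ((r + (2+j)).choose (2+j)) := Nat.mul_le_mul_left _ h1
    exact Nat.le_of_mul_le_mul_left h120 (by norm_num)
  -- step 2: α ≥ 3j + 4
  have hα : 3*j + 4 ≤ α := by
    by_contra h
    push_neg at h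
    have hmul : α * C ≤ (3*j+3) * C := Nat.mul_le_mul_right C (by omega)
    have hsplit : (3*j+5) * C = (3*j+3) * C + 2 * C := by ring
    linarith [hβlt, hαβ, hbin]
  -- step 3: 2*c0 + 2*γ + 1 ≤ 3j + 4
  have hN : 2*(c0*(2+j)+γ+β) = (2+j+1)*(2+j) := by rw [← hc0γ]; exact hC2
  have key : 2*c0 + 2*γ + 1 ≤ 3*j + 4 := by
    have h := hN
    zify at h hγlt
    suffices hk : 2*(c0:ℤ) + 2*(γ:ℤ) + 1 ≤ 3*(j:ℤ) + 4 by exact_mod_cast hk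
    nlinarith [h, hγlt, (show (1:ℤ) ≤ (β:ℤ) by exact_mod_cast hβpos),
      mul_nonneg (show (0:ℤ) ≤ (j:ℤ)+1-(γ:ℤ) by linarith)
        (show (0:ℤ) ≤ (j:ℤ)+1 by positivity),
      (show (0:ℤ) ≤ (j:ℤ)+2 by positivity)]
  refine ⟨by omega, ?_⟩
  intro R hR
  have : 2 * (c0 + γ + 1) ≤ s0 := by omega
  have hcast : 2 * ((c0:ℤ) + γ + 1) ≤ (s0:ℤ) := by exact_mod_cast this
  linarith [hR]
end

section
/- Fix r = 4 and an integer i ≥ 4 with i ≠ 15, and suppose β > 0. Then s_0 ≥ 2(c_0 + γ + 1). -/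
/-- Appendix, case `r = 4`: for an integer `i ≥ 4`, `i ≠ 15`, with `β > 0`,
one has `s₀ ≥ 2(c₀ + γ + 1)`. -/
theorem appendix_r_eq_4 (i α β s0 c0 γ : ℕ) (hi : 4 ≤ i) (hne : i ≠ 15)
    (hαβ : (4 + i).choose i = α * ((i + 1).choose 2) + β + (i + 1))
    (hβlt : β < (i + 1).choose 2)
    (hs0 : s0 = if β = 0 then α else α + 1)
    (hc0γ : (i + 1).choose 2 = c0 * i + γ + β)
    (hγlt : γ < i)
    (hβpos : 0 < β) :
    2 * (c0 + γ + 1) ≤ s0 := by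
  have hβ0 : β ≠ 0 := hβpos.ne'
  rw [hs0, if_neg hβ0]
  have hT : 2 * ((i+1).choose 2) = i * (i+1) := by
    rw [Nat.choose_two_right, Nat.add_sub_cancel]
    rw [Nat.mul_div_cancel' ((Nat.even_mul_succ_self i).two_dvd.trans (dvd_of_eq (mul_comm _ _)))]
    ring
  have hsym : (4+i).choose i = (4+i).choose 4 := by
    have h := Nat.choose_symm (show 4 ≤ 4+i by omega)
    simpa using h
  have hN : 24 * ((4+i).choose 4) = (i+1)*(i+2)*(i+3)*(i+4) := by
    rw [Nat.choose_eq_descFactorial_div_factorial]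
    have hd : Nat.factorial 4 ∣ (4+i).descFactorial 4 := Nat.factorial_dvd_descFactorial _ _
    rw [show Nat.factorial 4 = 24 from rfl] at hd ⊢
    rw [Nat.mul_div_cancel' hd]
    simp only [Nat.descFactorial]
    rw [show 4+i-3 = i+1 from by omega, show 4+i-2 = i+2 from by omega,
        show 4+i-1 = i+3 from by omega, show 4+i-0 = i+4 from by omega]
    ring
  rw [hsym] at hαβ
  have e1 : 2 * (24 * ((4+i).choose 4)) = 2 * (24 * (α * ((i + 1).choose 2) + β + (i + 1))) := by
    rw [hαβ]
  rw [hN] at e1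
  have e1' : 2 * ((i+1)*(i+2)*(i+3)*(i+4)) = 24 * α * (i * (i+1)) + 48 * β + 48 * (i+1) := by
    rw [← hT]; ring_nf; ring_nf at e1; linarith
  have e2 : i * (i+1) = 2 * c0 * i + 2 * γ + 2 * β := by
    rw [← hT, hc0γ]; ring
  have hβle' : 2 * β + 2 ≤ i * (i+1) := by omega
  rcases lt_or_ge i 26 with hlt | hge
  · clear hαβ hβlt hc0γ hT hN hsym e1 hs0
    interval_cases i <;> omega
  · clear hαβ hβlt hc0γ hT hN hsym e1 hs0
    have hc0 : 2 * c0 ≤ i := by nlinarith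
    have hα : 3 * i ≤ α + 1 := by
      by_contra h
      push_neg at h
      have hαz : (α:ℤ) ≤ 3*(i:ℤ) - 2 := by omega
      have hi' : (26:ℤ) ≤ (i:ℤ) := by exact_mod_cast hge
      have e1z : 2 * (((i:ℤ)+1)*((i:ℤ)+2)*((i:ℤ)+3)*((i:ℤ)+4))
          = 24 * (α:ℤ) * ((i:ℤ) * ((i:ℤ)+1)) + 48 * (β:ℤ) + 48 * ((i:ℤ)+1) := by
        exact_mod_cast e1'
      have hβz : 2 * (β:ℤ) + 2 ≤ (i:ℤ) * ((i:ℤ)+1) := by exact_mod_cast hβle'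
      have b : (0:ℤ) ≤ (i:ℤ)^2 - (i:ℤ) + 12 := by nlinarith
      have k1 : (0:ℤ) ≤ ((i:ℤ)-26) * ((i:ℤ)^2-(i:ℤ)+12) * ((i:ℤ)+1) :=
        mul_nonneg (mul_nonneg (by linarith) b) (by linarith)
      have hXnn : (0:ℤ) ≤ (i:ℤ) * ((i:ℤ)+1) := by positivity
      have m1 : 24 * (α:ℤ) * ((i:ℤ) * ((i:ℤ)+1)) ≤ 24 * (3*(i:ℤ)-2) * ((i:ℤ) * ((i:ℤ)+1)) := by
        have := mul_le_mul_of_nonneg_right (show 24*(α:ℤ) ≤ 24*(3*(i:ℤ)-2) by linarith) hXnn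
        linarith [this]
      nlinarith [k1, m1, hβz, e1z]
    omega
end
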